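/- The function w_y(x) = (K/2π) · (y₁(x₁² + x₂²) + x₁(y₁² + y₂²)) / ((x₁ + y₁)² + (x₂ − y₂)²), for fixed y ∈ ℝ²₊ and K ∈ ℝ, is harmonic in the open half-plane ℝ²₊ = {x₁ > 0}, is bounded on ℝ²₊, and its boundary values at x = (0, x₂) equal (K/2π) · y₁ x₂² / (y₁² + (x₂ − y₂)²). -/
import Mathlib

open MeasureTheory Real Set

noncomputable section

abbrev EV := EuclideanSpace ℝ (Fin 2)

/-- The open half-plane `{x₁ > 0}`. -/
def Hplane : Set EV := {x | 0 < x 0}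

/-- The Laplacian of `f : ℝ² → ℝ`. -/
def lap (f : EV → ℝ) (x : EV) : ℝ :=
  ∑ i : Fin 2,
    fderiv ℝ (fun y => fderiv ℝ f y (EuclideanSpace.single i 1)) x (EuclideanSpace.single i 1)

/-- The first-order correction to the Green function of a perturbed half-plane. -/
def w (K : ℝ) (y x : EV) : ℝ :=
  (K / (2 * π)) * (y 0 * (x 0 ^ 2 + x 1 ^ 2) + x 0 * (y 0 ^ 2 + y 1 ^ 2)) /
    ((x 0 + y 0) ^ 2 + (x 1 - y 1) ^ 2)

/-! ### Auxiliary partial-derivative machinery -/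

def p0 : EV →L[ℝ] ℝ := EuclideanSpace.proj 0
def p1 : EV →L[ℝ] ℝ := EuclideanSpace.proj 1

def HasPartials (f f1 f2 : EV → ℝ) (x : EV) : Prop :=
  HasFDerivAt f (f1 x • p0 + f2 x • p1) x

lemma hp_coord0 (x : EV) : HasPartials (fun z => z 0) (fun _ => 1) (fun _ => 0) x := by
  unfold HasPartials
  have h : HasFDerivAt (fun z : EV => z 0) (p0 : EV →L[ℝ] ℝ) x := p0.hasFDerivAt
  exact h.congr_fderiv (by ext v; simp [p0, p1])

lemma hp_coord1 (x : EV) : HasPartials (fun z => z 1) (fun _ => 0) (fun _ => 1) x := by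
  unfold HasPartials
  have h : HasFDerivAt (fun z : EV => z 1) (p1 : EV →L[ℝ] ℝ) x := p1.hasFDerivAt
  exact h.congr_fderiv (by ext v; simp [p0, p1])

lemma hp_const (r : ℝ) (x : EV) : HasPartials (fun _ => r) (fun _ => 0) (fun _ => 0) x := by
  unfold HasPartials
  exact (hasFDerivAt_const r x).congr_fderiv (by ext v; simp [p0, p1])

lemma HasPartials.congr_partials {f f1 f2 g1 g2 : EV → ℝ} {x : EV}
    (h : HasPartials f f1 f2 x) (h1 : f1 x = g1 x) (h2 : f2 x = g2 x) :
    HasPartials f g1 g2 x := by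
  unfold HasPartials at *
  rw [← h1, ← h2]; exact h

lemma HasPartials.congr_fun' {f g f1 f2 : EV → ℝ} {x : EV}
    (h : HasPartials f f1 f2 x) (hfg : ∀ z, f z = g z) : HasPartials g f1 f2 x := by
  have : f = g := funext hfg
  rwa [this] at h

lemma HasPartials.add {f g f1 f2 g1 g2 : EV → ℝ} {x : EV} (hf : HasPartials f f1 f2 x)
    (hg : HasPartials g g1 g2 x) :
    HasPartials (fun z => f z + g z) (fun z => f1 z + g1 z) (fun z => f2 z + g2 z) x := by
  unfold HasPartials at *
  have h := HasFDerivAt.add hf hg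
  exact h.congr_fderiv (by ext v; simp; try ring)

lemma HasPartials.sub {f g f1 f2 g1 g2 : EV → ℝ} {x : EV} (hf : HasPartials f f1 f2 x)
    (hg : HasPartials g g1 g2 x) :
    HasPartials (fun z => f z - g z) (fun z => f1 z - g1 z) (fun z => f2 z - g2 z) x := by
  unfold HasPartials at *
  have h := HasFDerivAt.sub hf hg
  exact h.congr_fderiv (by ext v; simp; try ring)

lemma HasPartials.mul {f g f1 f2 g1 g2 : EV → ℝ} {x : EV} (hf : HasPartials f f1 f2 x)
    (hg : HasPartials g g1 g2 x) :
    HasPartials (fun z => f z * g z) (fun z => f1 z * g z + f z * g1 z)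
      (fun z => f2 z * g z + f z * g2 z) x := by
  unfold HasPartials at *
  have h := HasFDerivAt.mul hf hg
  exact h.congr_fderiv (by ext v; simp; try ring)

lemma HasPartials.sq {f f1 f2 : EV → ℝ} {x : EV} (hf : HasPartials f f1 f2 x) :
    HasPartials (fun z => f z ^ 2) (fun z => 2 * f z * f1 z) (fun z => 2 * f z * f2 z) x := by
  have h := (hf.mul hf).congr_fun' (g := fun z => f z ^ 2) (fun z => by ring)
  exact h.congr_partials (by ring) (by ring)

lemma HasPartials.inv {g g1 g2 : EV → ℝ} {x : EV} (hg : HasPartials g g1 g2 x)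
    (hgx : g x ≠ 0) :
    HasPartials (fun z => (g z)⁻¹) (fun z => -g1 z / (g z)^2) (fun z => -g2 z / (g z)^2) x := by
  unfold HasPartials at *
  have h := (hasDerivAt_inv hgx).comp_hasFDerivAt x hg
  refine h.congr_fderiv ?_
  ext v; simp; field_simp; try ring

lemma HasPartials.div {f g f1 f2 g1 g2 : EV → ℝ} {x : EV} (hf : HasPartials f f1 f2 x)
    (hg : HasPartials g g1 g2 x) (hgx : g x ≠ 0) :
    HasPartials (fun z => f z / g z) (fun z => (f1 z * g z - f z * g1 z) / (g z)^2)
      (fun z => (f2 z * g z - f z * g2 z) / (g z)^2) x := by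
  have h := hf.mul (hg.inv hgx)
  have h2 : HasPartials (fun z => f z / g z)
      (fun z => f1 z * (g z)⁻¹ + f z * (-g1 z / (g z)^2))
      (fun z => f2 z * (g z)⁻¹ + f z * (-g2 z / (g z)^2)) x := by
    exact h.congr_fun' (g := fun z => f z / g z) (fun z => (div_eq_mul_inv (f z) (g z)).symm)
  exact h2.congr_partials (by field_simp; ring) (by field_simp; ring)

lemma HasPartials.fderiv0 {f f1 f2 : EV → ℝ} {x : EV} (h : HasPartials f f1 f2 x) :
    fderiv ℝ f x (EuclideanSpace.single 0 1) = f1 x := by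
  unfold HasPartials at h
  rw [h.fderiv]; simp [p0, p1]

lemma HasPartials.fderiv1 {f f1 f2 : EV → ℝ} {x : EV} (h : HasPartials f f1 f2 x) :
    fderiv ℝ f x (EuclideanSpace.single 1 1) = f2 x := by
  unfold HasPartials at h
  rw [h.fderiv]; simp [p0, p1]

/-! ### The explicit first partial derivatives of `w` -/

def W1 (K : ℝ) (y z : EV) : ℝ :=
  (K / (2 * π)) * ((2 * y 0 * z 0 + (y 0 ^ 2 + y 1 ^ 2)) * ((z 0 + y 0) ^ 2 + (z 1 - y 1) ^ 2)
    - (y 0 * (z 0 ^ 2 + z 1 ^ 2) + z 0 * (y 0 ^ 2 + y 1 ^ 2)) * (2 * (z 0 + y 0)))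
    / ((z 0 + y 0) ^ 2 + (z 1 - y 1) ^ 2) ^ 2

def W2 (K : ℝ) (y z : EV) : ℝ :=
  (K / (2 * π)) * ((2 * y 0 * z 1) * ((z 0 + y 0) ^ 2 + (z 1 - y 1) ^ 2)
    - (y 0 * (z 0 ^ 2 + z 1 ^ 2) + z 0 * (y 0 ^ 2 + y 1 ^ 2)) * (2 * (z 1 - y 1)))
    / ((z 0 + y 0) ^ 2 + (z 1 - y 1) ^ 2) ^ 2

lemma Dne {y z : EV} (hy : 0 < y 0) (hz : 0 < z 0) :
    ((z 0 + y 0) ^ 2 + (z 1 - y 1) ^ 2) ≠ 0 := by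
  have h0 : 0 < z 0 + y 0 := by linarith
  have := add_pos_of_pos_of_nonneg (pow_pos h0 2) (sq_nonneg (z 1 - y 1))
  exact this.ne'

lemma hp_w (K : ℝ) (y : EV) (hy : 0 < y 0) (z : EV) (hz : 0 < z 0) :
    HasPartials (w K y) (W1 K y) (W2 K y) z := by
  have hD := Dne hy hz
  have c0 := hp_coord0 z
  have c1 := hp_coord1 z
  have hpN := (hp_const (K / (2 * π)) z).mul
    (((hp_const (y 0) z).mul (c0.sq.add c1.sq)).add (c0.mul (hp_const (y 0 ^ 2 + y 1 ^ 2) z)))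
  have hpD := ((c0.add (hp_const (y 0) z)).sq).add ((c1.sub (hp_const (y 1) z)).sq)
  have h := hpN.div hpD hD
  have h2 := h.congr_fun' (g := w K y) (fun t => by simp only [w])
  refine h2.congr_partials ?_ ?_
  · simp only [W1]; field_simp; ring
  · simp only [W2]; field_simp; ring

/-- For fixed `y` in the half-plane and `K ∈ ℝ`, the function `w_y` is harmonic in the
half-plane, bounded there, and has boundary values
`(K/2π) y₁ x₂² / (y₁² + (x₂ − y₂)²)` at points `x = (0, x₂)`. -/
theorem w_harmonic_bounded_boundary (K : ℝ) (y : EV) (hy : y ∈ Hplane) :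
    (∀ x ∈ Hplane, lap (w K y) x = 0) ∧
    (∃ M : ℝ, ∀ x ∈ Hplane, |w K y x| ≤ M) ∧
    (∀ x : EV, x 0 = 0 →
      w K y x = (K / (2 * π)) * (y 0 * (x 1) ^ 2) / ((y 0) ^ 2 + (x 1 - y 1) ^ 2)) := by
  have hy0 : 0 < y 0 := hy
  refine ⟨?_, ?_, ?_⟩
  · -- harmonicity
    intro x hx
    have hx0 : 0 < x 0 := hx
    have hD := Dne hy0 hx0
    have hD2 : (((x 0 + y 0) ^ 2 + (x 1 - y 1) ^ 2) ^ 2) ≠ 0 := pow_ne_zero _ hD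
    -- HasPartials of W1 at x
    have c0 := hp_coord0 x
    have c1 := hp_coord1 x
    have hpN0 := ((hp_const (y 0) x).mul (c0.sq.add c1.sq)).add
      (c0.mul (hp_const (y 0 ^ 2 + y 1 ^ 2) x))
    have hpD := ((c0.add (hp_const (y 0) x)).sq).add ((c1.sub (hp_const (y 1) x)).sq)
    have hpN1 := ((hp_const (2 * y 0) x).mul c0).add (hp_const (y 0 ^ 2 + y 1 ^ 2) x)
    have hpN2 := (hp_const (2 * y 0) x).mul c1
    have hpD1 := (hp_const 2 x).mul (c0.add (hp_const (y 0) x))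
    have hpD2 := (hp_const 2 x).mul (c1.sub (hp_const (y 1) x))
    have hBig1 := (hpN1.mul hpD).sub (hpN0.mul hpD1)
    have hBig2 := (hpN2.mul hpD).sub (hpN0.mul hpD2)
    have hW1 := (((hp_const (K / (2 * π)) x).mul hBig1).div hpD.sq hD2).congr_fun'
      (g := W1 K y) (fun t => by simp only [W1])
    have hW2 := (((hp_const (K / (2 * π)) x).mul hBig2).div hpD.sq hD2).congr_fun'
      (g := W2 K y) (fun t => by simp only [W2])
    have hopen : IsOpen {z : EV | 0 < z 0} :=
      isOpen_lt continuous_const (EuclideanSpace.proj (0 : Fin 2)).continuous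
    have hmem : {z : EV | 0 < z 0} ∈ nhds x := hopen.mem_nhds hx0
    have hev0 : (fun z : EV => fderiv ℝ (w K y) z (EuclideanSpace.single 0 1))
        =ᶠ[nhds x] W1 K y := by
      filter_upwards [hmem] with z hz
      exact (hp_w K y hy0 z hz).fderiv0
    have hev1 : (fun z : EV => fderiv ℝ (w K y) z (EuclideanSpace.single 1 1))
        =ᶠ[nhds x] W2 K y := by
      filter_upwards [hmem] with z hz
      exact (hp_w K y hy0 z hz).fderiv1
    simp only [lap, Fin.sum_univ_two]
    rw [hev0.fderiv_eq, hev1.fderiv_eq, hW1.fderiv0, hW2.fderiv1]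
    field_simp
    ring
  · -- boundedness
    refine ⟨|K / (2 * π)| * (2 * (y 0 ^ 2 + y 1 ^ 2) / y 0), ?_⟩
    intro x hx
    have hx0 : 0 < x 0 := hx
    have h0 : 0 < x 0 + y 0 := by linarith
    have hDpos : 0 < (x 0 + y 0) ^ 2 + (x 1 - y 1) ^ 2 :=
      add_pos_of_pos_of_nonneg (pow_pos h0 2) (sq_nonneg _)
    have hNnn : 0 ≤ y 0 * (x 0 ^ 2 + x 1 ^ 2) + x 0 * (y 0 ^ 2 + y 1 ^ 2) := by positivity
    have key : y 0 * (y 0 * (x 0 ^ 2 + x 1 ^ 2) + x 0 * (y 0 ^ 2 + y 1 ^ 2))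
        ≤ 2 * (y 0 ^ 2 + y 1 ^ 2) * ((x 0 + y 0) ^ 2 + (x 1 - y 1) ^ 2) := by
      set a := y 0; set b := y 1; set s := x 0; set t := x 1
      have key2 : 4*(a^2+2*b^2) * (2*(a^2+b^2)*((s+a)^2+(t-b)^2) - a*(a*(s^2+t^2)+s*(a^2+b^2)))
          = (2*(a^2+2*b^2)*s)^2 + 12*a*(a^2+b^2)*(a^2+2*b^2)*s
            + (2*(a^2+2*b^2)*t - 4*b*(a^2+b^2))^2 + 8*a^2*(a^2+b^2)^2 := by ring
      have hA : (0:ℝ) < 4*(a^2+2*b^2) := by positivity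
      have h1 : (0:ℝ) ≤ 12*a*(a^2+b^2)*(a^2+2*b^2)*s := by positivity
      have h2 : (0:ℝ) ≤ (2*(a^2+2*b^2)*s)^2 := sq_nonneg _
      have h3 : (0:ℝ) ≤ (2*(a^2+2*b^2)*t - 4*b*(a^2+b^2))^2 := sq_nonneg _
      have h4 : (0:ℝ) ≤ 8*a^2*(a^2+b^2)^2 := by positivity
      nlinarith [key2, hA, h1, h2, h3, h4]
    have hratio : (y 0 * (x 0 ^ 2 + x 1 ^ 2) + x 0 * (y 0 ^ 2 + y 1 ^ 2)) /
        ((x 0 + y 0) ^ 2 + (x 1 - y 1) ^ 2) ≤ 2 * (y 0 ^ 2 + y 1 ^ 2) / y 0 := by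
      rw [div_le_div_iff₀ hDpos hy0]
      nlinarith [key]
    have hw : w K y x = (K / (2 * π)) * ((y 0 * (x 0 ^ 2 + x 1 ^ 2) + x 0 * (y 0 ^ 2 + y 1 ^ 2)) /
        ((x 0 + y 0) ^ 2 + (x 1 - y 1) ^ 2)) := by
      rw [w]; ring
    rw [hw, abs_mul]
    refine mul_le_mul_of_nonneg_left ?_ (abs_nonneg _)
    rw [abs_of_nonneg (div_nonneg hNnn hDpos.le)]
    exact hratio
  · -- boundary values
    intro x hx
    rw [w, hx]
    ring_nf
end
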